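/- (Theorem 3 of the paper: finite sample size control.) Under Assumption 1, for any α ∈ (0,1), ℙ(T_n(β) ≤ q_{1−α}) ≥ 1 − α, where q_{1−α} = inf{c ∈ ℝ : ℙ(T*_n(β) ≤ c) ≥ 1 − α} is the (1−α)-quantile of T*_n(β). -/

import Mathlib

/-! Under the null, `Y i ≥ Y* i` whenever `X i β ≥ 0` and `Y i ≤ Y* i` whenever `X i β ≤ 0`,
so every sample moment computed from `Y` is at least the one computed from `Y*`. A larger moment
gives a smaller positive part of the studentized moment (larger mean, smaller estimated standard
deviation), hence `T_n(β) ≤ T*_n(β)` pointwise. The bound is then the defining property of the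
quantile, `P(T*_n(β) ≤ q) ≥ 1 - α`, which holds by right-continuity of the distribution function. -/

open MeasureTheory ProbabilityTheory

/-- Sample upper moment `m̂_u(b,v)` computed from outcomes `y`. -/
noncomputable def muHatU {n K : ℕ} (X : Fin n → Fin K → ℝ) (b v : Fin K → ℝ)
    (y : Fin n → ℝ) : ℝ :=
  (n : ℝ)⁻¹ * ∑ i, (2 * y i - 1) *
    (if 0 ≤ (∑ j, X i j * b j) ∧ (∑ j, X i j * v j) < 0 then 1 else 0)

/-- Sample lower moment `m̂_l(b,v)` computed from outcomes `y`. -/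
noncomputable def muHatL {n K : ℕ} (X : Fin n → Fin K → ℝ) (b v : Fin K → ℝ)
    (y : Fin n → ℝ) : ℝ :=
  (n : ℝ)⁻¹ * ∑ i, (1 - 2 * y i) *
    (if (∑ j, X i j * b j) ≤ 0 ∧ 0 < (∑ j, X i j * v j) then 1 else 0)

/-- Sample variance `σ̂_u²(b,v)`. -/
noncomputable def sigHatU2 {n K : ℕ} (X : Fin n → Fin K → ℝ) (b v : Fin K → ℝ)
    (y : Fin n → ℝ) : ℝ :=
  (n : ℝ)⁻¹ * (∑ i, (if 0 ≤ (∑ j, X i j * b j) ∧ (∑ j, X i j * v j) < 0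
      then (1:ℝ) else 0)) - (muHatU X b v y) ^ 2

/-- Sample variance `σ̂_l²(b,v)`. -/
noncomputable def sigHatL2 {n K : ℕ} (X : Fin n → Fin K → ℝ) (b v : Fin K → ℝ)
    (y : Fin n → ℝ) : ℝ :=
  (n : ℝ)⁻¹ * (∑ i, (if (∑ j, X i j * b j) ≤ 0 ∧ 0 < (∑ j, X i j * v j)
      then (1:ℝ) else 0)) - (muHatL X b v y) ^ 2

/-- The test statistic `T_n(b)` computed from outcomes `y`. -/
noncomputable def Tstat {n K : ℕ} (X : Fin n → Fin K → ℝ)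
    (Vu Vl : Finset (Fin K → ℝ)) (hu : Vu.Nonempty) (hl : Vl.Nonempty)
    (ε : ℝ) (b : Fin K → ℝ) (y : Fin n → ℝ) : ℝ :=
  max 0 (max
    (Vu.sup' hu fun v =>
      Real.sqrt n * (-(muHatU X b v y)) /
        max (Real.sqrt (sigHatU2 X b v y)) ε)
    (Vl.sup' hl fun v =>
      Real.sqrt n * (-(muHatL X b v y)) /
        max (Real.sqrt (sigHatL2 X b v y)) ε))

open Filter Topology Set

theorem StieltjesFunction.le_apply_sInf (f : StieltjesFunction ℝ) {p : ℝ}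
    (hne : {c | p ≤ f c}.Nonempty) : p ≤ f (sInf {c | p ≤ f c}) := by
  have hright : Tendsto f (𝓝[>] sInf {c | p ≤ f c}) (𝓝 (f (sInf {c | p ≤ f c}))) :=
    ((f.right_continuous _).mono Ioi_subset_Ici_self).tendsto
  refine ge_of_tendsto hright (eventually_nhdsWithin_of_forall fun c hc => ?_)
  obtain ⟨s, hs, hsc⟩ := exists_lt_of_csInf_lt hne hc
  exact hs.trans (f.mono hsc.le)

theorem ProbabilityTheory.le_cdf_sInf (μ : Measure ℝ) [IsProbabilityMeasure μ] {p : ℝ}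
    (hp : p < 1) : p ≤ cdf μ (sInf {c | p ≤ cdf μ c}) :=
  (cdf μ).le_apply_sInf ((tendsto_cdf_atTop μ).eventually (eventually_ge_nhds hp)).exists

@[fun_prop]
theorem Finset.measurable_sup'_apply {ι δ α : Type*} [MeasurableSpace δ] [MeasurableSpace α]
    [SemilatticeSup α] [MeasurableSup₂ α] {s : Finset ι} (hs : s.Nonempty) {f : ι → δ → α}
    (hf : ∀ i ∈ s, Measurable (f i)) : Measurable fun x => s.sup' hs fun i => f i x := by
  convert Finset.measurable_sup' hs hf using 1
  exact funext fun x => (Finset.sup'_apply hs f x).symm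

theorem div_max_sqrt_sub_sq_le_max {s A ε m m' : ℝ} (hs : 0 ≤ s) (hε : 0 < ε) (hm : m' ≤ m) :
    s * -m / max √(A - m ^ 2) ε ≤ max 0 (s * -m' / max √(A - m' ^ 2) ε) := by
  rcases le_or_gt m 0 with hneg | hpos
  · refine le_max_of_le_right (div_le_div₀ ?_ ?_ ?_ ?_)
    · exact mul_nonneg hs (by linarith)
    · exact mul_le_mul_of_nonneg_left (by linarith) hs
    · exact hε.trans_le (le_max_right _ _)
    · exact max_le_max (Real.sqrt_le_sqrt (by nlinarith)) le_rfl
  · refine le_max_of_le_left (div_nonpos_of_nonpos_of_nonneg ?_ ?_)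
    · exact mul_nonpos_of_nonneg_of_nonpos hs (by linarith)
    · exact hε.le.trans (le_max_right _ _)

section Domination

variable {n K : ℕ} (X : Fin n → Fin K → ℝ) (b : Fin K → ℝ)

theorem muHatU_le_muHatU (v : Fin K → ℝ) {y z : Fin n → ℝ}
    (h : ∀ i, 0 ≤ ∑ j, X i j * b j → z i ≤ y i) : muHatU X b v z ≤ muHatU X b v y := by
  refine mul_le_mul_of_nonneg_left (Finset.sum_le_sum fun i _ => ?_) (by positivity)
  split_ifs with hi
  · linarith [h i hi.1]
  · simp

theorem muHatL_le_muHatL (v : Fin K → ℝ) {y z : Fin n → ℝ}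
    (h : ∀ i, ∑ j, X i j * b j ≤ 0 → y i ≤ z i) : muHatL X b v z ≤ muHatL X b v y := by
  refine mul_le_mul_of_nonneg_left (Finset.sum_le_sum fun i _ => ?_) (by positivity)
  split_ifs with hi
  · linarith [h i hi.1]
  · simp

variable {Vu Vl : Finset (Fin K → ℝ)} (hu : Vu.Nonempty) (hl : Vl.Nonempty) {ε : ℝ}

theorem Tstat_le_Tstat (hε : 0 < ε) {y z : Fin n → ℝ}
    (hU : ∀ i, 0 ≤ ∑ j, X i j * b j → z i ≤ y i) (hL : ∀ i, ∑ j, X i j * b j ≤ 0 → y i ≤ z i) :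
    Tstat X Vu Vl hu hl ε b y ≤ Tstat X Vu Vl hu hl ε b z := by
  refine max_le (le_max_left _ _) (max_le (Finset.sup'_le _ _ fun v hv => ?_)
    (Finset.sup'_le _ _ fun v hv => ?_))
  · refine (div_max_sqrt_sub_sq_le_max (Real.sqrt_nonneg _) hε
      (muHatU_le_muHatU X b v hU)).trans (max_le_max le_rfl ?_)
    exact le_max_of_le_left (Finset.le_sup'
      (fun v => √n * -muHatU X b v z / max √(sigHatU2 X b v z) ε) hv)
  · refine (div_max_sqrt_sub_sq_le_max (Real.sqrt_nonneg _) hε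
      (muHatL_le_muHatL X b v hL)).trans (max_le_max le_rfl ?_)
    exact le_max_of_le_right (Finset.le_sup'
      (fun v => √n * -muHatL X b v z / max √(sigHatL2 X b v z) ε) hv)

theorem Tstat_shift_le (hε : 0 < ε) (u : Fin n → ℝ) :
    Tstat X Vu Vl hu hl ε b (fun i => if 0 ≤ (∑ j, X i j * b j) + u i then 1 else 0) ≤
      Tstat X Vu Vl hu hl ε b (fun i => if 0 ≤ u i then 1 else 0) := by
  refine Tstat_le_Tstat X b hu hl hε (fun i hi => ?_) (fun i hi => ?_) <;>
    split_ifs <;> linarith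

end Domination

theorem measurable_Tstat {n K : ℕ} (X : Fin n → Fin K → ℝ)
    (Vu Vl : Finset (Fin K → ℝ)) (hu : Vu.Nonempty) (hl : Vl.Nonempty)
    (ε : ℝ) (b : Fin K → ℝ) : Measurable (Tstat X Vu Vl hu hl ε b) := by
  unfold Tstat sigHatU2 sigHatL2 muHatU muHatL
  fun_prop

theorem theorem3_size_control
    {Ω : Type*} [MeasurableSpace Ω] (P : Measure Ω) [IsProbabilityMeasure P]
    {n K : ℕ}
    (X : Fin n → Fin K → ℝ) (β : Fin K → ℝ)
    (U : Fin n → Ω → ℝ) (hU : ∀ i, Measurable (U i))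
    (Y : Fin n → Ω → ℝ)
    (hY : ∀ i ω, Y i ω = if 0 ≤ (∑ j, X i j * β j) + U i ω then 1 else 0)
    (ε : ℝ) (hε : 0 < ε)
    (Vu Vl : Finset (Fin K → ℝ)) (hu : Vu.Nonempty) (hl : Vl.Nonempty)
    (α : ℝ) (hα : α ∈ Set.Ioo (0 : ℝ) 1)
    (q : ℝ)
    (hq : q = sInf {c : ℝ | 1 - α ≤
      (P {ω | Tstat X Vu Vl hu hl ε β
          (fun i => if 0 ≤ U i ω then 1 else 0) ≤ c}).toReal}) :
    1 - α ≤ (P {ω | Tstat X Vu Vl hu hl ε β (fun i => Y i ω) ≤ q}).toReal := by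
  set Tstar : Ω → ℝ := fun ω => Tstat X Vu Vl hu hl ε β (fun i => if 0 ≤ U i ω then 1 else 0)
  have hTstar : Measurable Tstar :=
    (measurable_Tstat X Vu Vl hu hl ε β).comp <| measurable_pi_lambda _ fun i =>
      Measurable.ite (measurableSet_le measurable_const (hU i)) measurable_const measurable_const
  have := Measure.isProbabilityMeasure_map (μ := P) hTstar.aemeasurable
  have hcdf : ∀ c, cdf (P.map Tstar) c = (P {ω | Tstar ω ≤ c}).toReal := fun c => by
    rw [cdf_eq_real, measureReal_def, Measure.map_apply hTstar measurableSet_Iic]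
    rfl
  have hdom : {ω | Tstar ω ≤ q} ⊆ {ω | Tstat X Vu Vl hu hl ε β (fun i => Y i ω) ≤ q} :=
    fun ω hω => by
      simp only [Set.mem_ofPred_eq, hY]
      exact (Tstat_shift_le X β hu hl hε (fun i => U i ω)).trans hω
  calc 1 - α ≤ cdf (P.map Tstar) q := by
        simpa only [hq, hcdf] using le_cdf_sInf (P.map Tstar) (sub_lt_self 1 hα.1)
    _ = (P {ω | Tstar ω ≤ q}).toReal := hcdf q
    _ ≤ _ := ENNReal.toReal_mono (measure_ne_top _ _) (measure_mono hdom)
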